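/- arXiv:2206.06859 — 6 statements merged into one kernel-verified Lean document; each statement's English description precedes it below -/
import Mathlib

section
/- Let R : ℕ × ℕ → ℕ be a total computable function such that μ(R(n,w)) = n for all n, w (i.e., R(n,w) ∈ B^n). Then there exists a computable coloring c : ℕ → Bool (two colors) such that for every positive integer w and every n < λ(w), c(w) ≠ c(R(n,w) + w). -/
/-!
Colour `x` relative to the aligned dyadic block `[a, a + 2^(k+1))` containing it. An edge
`w → w + R(j, w)` with `2^(j+1) ∣ w` either stays inside one half of the block or crosses
from the lower half into the upper one, and divisibility forces a crossing edge to be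
`a → a + R(k, a)`. So the colouring at level `k + 1` is obtained from the one at level `k`
by swapping the colours of the upper half whenever that single crossing edge would otherwise
be monochromatic. A point `x < 2^k` lies in the lower half of every larger block based at `0`,
so the colourings stabilise and `x ↦ dyadicColor R x x` is one proper colouring; it is
computable because each level is tabulated from the previous one.
-/

/-- `mu x = ⌊log₂ x⌋`, the exponent of the highest power of 2 in the binary expansion of `x`. -/
def mu (x : ℕ) : ℕ := Nat.log 2 x

/-- `lam x` is the 2-adic valuation of `x`, the exponent of the lowest power of 2
in the binary expansion of `x`. -/
def lam (x : ℕ) : ℕ := padicValNat 2 x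

/-- `Bset n = B^n = {x ∈ ℤ⁺ : μ(x) = n}`. -/
def Bset (n : ℕ) : Set ℕ := {x | 0 < x ∧ mu x = n}

/-- A set `A ⊆ ℤ⁺` has weak apartness if every `A ∩ B^m` has at most one element and
for every `l` there are at most two elements `x ∈ A` with `λ(x) = l`. -/
def WeakApart (A : Set ℕ) : Prop :=
  (∀ m, (A ∩ Bset m).Subsingleton) ∧
  (∀ l, ∀ x ∈ A, ∀ y ∈ A, ∀ z ∈ A,
    lam x = l → lam y = l → lam z = l → x = y ∨ x = z ∨ y = z)

/-- `FS A`: all finite sums of distinct elements of `A`. -/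
def FS (A : Set ℕ) : Set ℕ :=
  {n | ∃ F : Finset ℕ, ↑F ⊆ A ∧ F.Nonempty ∧ F.sum id = n}

/-- `FSle k A = FS^{≤k}(A)`: sums of at most `k` distinct elements of `A`. -/
def FSle (k : ℕ) (A : Set ℕ) : Set ℕ :=
  {n | ∃ F : Finset ℕ, ↑F ⊆ A ∧ F.Nonempty ∧ F.card ≤ k ∧ F.sum id = n}

/-- `A` is `Π⁰₃`: `x ∈ A ↔ ∀ y ∃ z ∀ w, R x y z w` for a computable relation `R`. -/
def Pi03 (A : Set ℕ) : Prop :=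
  ∃ R : ℕ → ℕ → ℕ → ℕ → Bool,
    Computable (fun p : ℕ × ℕ × ℕ × ℕ => R p.1 p.2.1 p.2.2.1 p.2.2.2) ∧
    ∀ x, x ∈ A ↔ ∀ y, ∃ z, ∀ w, R x y z w = true

/-- `A` is `Σ⁰₃`: `x ∈ A ↔ ∃ y ∀ z ∃ w, R x y z w` for a computable relation `R`. -/
def Sigma03 (A : Set ℕ) : Prop :=
  ∃ R : ℕ → ℕ → ℕ → ℕ → Bool,
    Computable (fun p : ℕ × ℕ × ℕ × ℕ => R p.1 p.2.1 p.2.2.1 p.2.2.2) ∧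
    ∀ x, x ∈ A ↔ ∃ y, ∀ z, ∃ w, R x y z w = true

/-- `A` is `Δ⁰₃` iff it is both `Σ⁰₃` and `Π⁰₃`. -/
def Delta03 (A : Set ℕ) : Prop := Sigma03 A ∧ Pi03 A

theorem Computable.list_map_range {α σ : Type*} [Primcodable α] [Primcodable σ]
    {n : α → ℕ} {f : α → ℕ → σ} (hn : Computable n) (hf : Computable₂ f) :
    Computable fun a => (List.range (n a)).map (f a) := by
  have step : Computable₂ fun (a : α) (p : ℕ × List σ) => p.2 ++ [f a p.1] :=
    Computable.list_concat.comp (Computable.snd.comp Computable.snd)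
      (hf.comp Computable.fst (Computable.fst.comp Computable.snd))
  refine (Computable.nat_rec hn (Computable.const []) step).of_eq fun a => ?_
  induction n a with
  | zero => rfl
  | succ m ih => simp [ih, List.range_succ]

theorem Primrec.nat_pow : Primrec₂ ((· ^ ·) : ℕ → ℕ → ℕ) :=
  Primrec₂.unpaired'.1 Nat.Primrec.pow

theorem Nat.add_le_of_dvd_of_lt {m a b : ℕ} (ha : m ∣ a) (hb : m ∣ b) (h : a < b) :
    a + m ≤ b := by
  obtain ⟨p, rfl⟩ := ha
  obtain ⟨q, rfl⟩ := hb
  have hpq : p < q := lt_of_mul_lt_mul_left h (Nat.zero_le m)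
  calc m * p + m = m * (p + 1) := by ring
    _ ≤ m * q := Nat.mul_le_mul_left m hpq

theorem Nat.div_mul_eq_of_dvd {m a x : ℕ} (ha : m ∣ a) (hax : a ≤ x) (hxa : x < a + m) :
    x / m * m = a := by
  obtain ⟨q, rfl⟩ := ha
  rw [Nat.div_eq_of_lt_le (k := q) (by linarith) (by linarith), mul_comm]

theorem mem_Bset_iff {n x : ℕ} : x ∈ Bset n ↔ 2 ^ n ≤ x ∧ x < 2 ^ (n + 1) := by
  constructor
  · rintro ⟨hx, hlog⟩
    exact (Nat.log_eq_iff (Or.inr ⟨one_lt_two, hx.ne'⟩)).1 hlog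
  · rintro ⟨hlo, hhi⟩
    exact ⟨Nat.pos_of_ne_zero (by rintro rfl; simp at hlo),
      Nat.log_eq_of_pow_le_of_lt_pow hlo hhi⟩

theorem eq_and_eq_of_dvd_of_crossing {a w r j k : ℕ} (ha : 2 ^ (k + 1) ∣ a)
    (hw : 2 ^ (j + 1) ∣ w) (haw : a ≤ w) (hwk : w < a + 2 ^ k) (hrj : 2 ^ j ≤ r)
    (hr : r < 2 ^ (j + 1)) (hcross : a + 2 ^ k ≤ w + r) (hrk : w + r < a + 2 ^ (k + 1)) :
    w = a ∧ j = k := by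
  have hjk : j < k + 1 := (Nat.pow_lt_pow_iff_right one_lt_two).1 (by omega)
  have hkj : k ≤ j := by
    by_contra! h
    have := Nat.add_le_of_dvd_of_lt hw
      (dvd_add ((pow_dvd_pow 2 (by omega)).trans ha) (pow_dvd_pow 2 h)) hwk
    omega
  obtain rfl : j = k := by omega
  refine ⟨?_, rfl⟩
  by_contra hne
  have := Nat.add_le_of_dvd_of_lt ha hw (lt_of_le_of_ne haw (Ne.symm hne))
  rw [pow_succ] at this
  omega

theorem Bool.beq_ne_beq_of_ne {x y : Bool} (z : Bool) (h : x ≠ y) : (x == z) ≠ (y == z) := by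
  cases z <;> simpa using h

section DyadicColor

variable (R : ℕ → ℕ → ℕ)

def dyadicStep (k : ℕ) (c : ℕ → Bool) (x : ℕ) : Bool :=
  let a := x / 2 ^ (k + 1) * 2 ^ (k + 1)
  if x < a + 2 ^ k then c x else c x == c (a + R k a)

def dyadicColor : ℕ → ℕ → Bool
  | 0 => fun _ => false
  | k + 1 => dyadicStep R k (dyadicColor k)

variable {R}

theorem dyadicColor_succ_of_lt {k a x : ℕ} (ha : 2 ^ (k + 1) ∣ a) (hax : a ≤ x)
    (hx : x < a + 2 ^ k) : dyadicColor R (k + 1) x = dyadicColor R k x := by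
  have hbase := Nat.div_mul_eq_of_dvd ha hax (by rw [pow_succ]; omega)
  simp only [dyadicColor, dyadicStep, hbase, if_pos hx]

theorem dyadicColor_succ_of_le {k a x : ℕ} (ha : 2 ^ (k + 1) ∣ a) (hx : a + 2 ^ k ≤ x)
    (hxa : x < a + 2 ^ (k + 1)) :
    dyadicColor R (k + 1) x = (dyadicColor R k x == dyadicColor R k (a + R k a)) := by
  have hbase := Nat.div_mul_eq_of_dvd ha (by omega) hxa
  simp only [dyadicColor, dyadicStep, hbase, if_neg (not_lt.2 hx)]

theorem dyadicColor_of_dvd {k a : ℕ} (ha : 2 ^ k ∣ a) : dyadicColor R k a = false := by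
  induction k with
  | zero => rfl
  | succ k ih =>
    rw [dyadicColor_succ_of_lt ha le_rfl (Nat.lt_add_of_pos_right (by positivity))]
    exact ih ((pow_dvd_pow 2 k.le_succ).trans ha)

theorem dyadicColor_eq_of_lt_two_pow {k K x : ℕ} (hx : x < 2 ^ k) (hkK : k ≤ K) :
    dyadicColor R K x = dyadicColor R k x := by
  induction K, hkK using Nat.le_induction with
  | base => rfl
  | succ K hkK ih =>
    have hxK : x < 2 ^ K := hx.trans_le (Nat.pow_le_pow_right two_pos hkK)
    rw [dyadicColor_succ_of_lt (dvd_zero _) (Nat.zero_le x) (by omega), ih]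

theorem dyadicColor_ne (hRlo : ∀ n w, 2 ^ n ≤ R n w) (hRhi : ∀ n w, R n w < 2 ^ (n + 1))
    {k a w j : ℕ} (ha : 2 ^ k ∣ a) (haw : a ≤ w) (hwa : w + R j w < a + 2 ^ k)
    (hw : 2 ^ (j + 1) ∣ w) : dyadicColor R k w ≠ dyadicColor R k (w + R j w) := by
  have hR := hRlo j w
  have hpos : 1 ≤ 2 ^ j := Nat.one_le_two_pow
  induction k generalizing a with
  | zero => omega
  | succ k ih =>
    have hpow : 2 ^ (k + 1) = 2 ^ k + 2 ^ k := by rw [pow_succ]; omega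
    have ha' : 2 ^ k ∣ a := (pow_dvd_pow 2 k.le_succ).trans ha
    rcases lt_or_ge (w + R j w) (a + 2 ^ k) with hvlow | hvup
    · rw [dyadicColor_succ_of_lt ha haw (by omega), dyadicColor_succ_of_lt ha (by omega) hvlow]
      exact ih ha' haw hvlow
    rcases lt_or_ge w (a + 2 ^ k) with hwlow | hwup
    · obtain ⟨rfl, rfl⟩ :=
        eq_and_eq_of_dvd_of_crossing ha hw haw hwlow hR (hRhi j w) hvup hwa
      rw [dyadicColor_succ_of_lt ha le_rfl hwlow, dyadicColor_succ_of_le ha hvup hwa,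
        dyadicColor_of_dvd ha']
      simp
    · rw [dyadicColor_succ_of_le ha hwup (by omega), dyadicColor_succ_of_le ha (by omega) hwa]
      exact Bool.beq_ne_beq_of_ne _ (ih (dvd_add ha' dvd_rfl) hwup (by omega))

theorem dyadicStep_congr (hRhi : ∀ n w, R n w < 2 ^ (n + 1)) {k N x : ℕ} {f g : ℕ → Bool}
    (hN : 2 ^ (k + 1) ∣ N) (hx : x < N) (hfg : ∀ y < N, f y = g y) :
    dyadicStep R k f x = dyadicStep R k g x := by
  have hbase : x / 2 ^ (k + 1) * 2 ^ (k + 1) + 2 ^ (k + 1) ≤ N :=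
    Nat.add_le_of_dvd_of_lt (Nat.dvd_mul_left _ _) hN ((Nat.div_mul_le_self x _).trans_lt hx)
  have hy := hRhi k (x / 2 ^ (k + 1) * 2 ^ (k + 1))
  simp only [dyadicStep]
  split_ifs
  · exact hfg x hx
  · rw [hfg x hx, hfg _ (by omega)]

variable (R) in
def colorTable (N : ℕ) : ℕ → List Bool
  | 0 => (List.range N).map (dyadicColor R 0)
  | k + 1 => (List.range N).map (dyadicStep R k fun y => (colorTable N k).getD y false)

theorem colorTable_eq (hRhi : ∀ n w, R n w < 2 ^ (n + 1)) {N k : ℕ} (hN : 2 ^ k ∣ N) :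
    colorTable R N k = (List.range N).map (dyadicColor R k) := by
  induction k with
  | zero => rfl
  | succ k ih =>
    rw [colorTable, ih ((pow_dvd_pow 2 k.le_succ).trans hN)]
    refine List.map_congr_left fun x hx => dyadicStep_congr hRhi hN (List.mem_range.1 hx)
      fun y hy => ?_
    simp [List.getD_eq_getElem?_getD, hy]

theorem Computable.dyadicStep {α : Type*} [Primcodable α] (hR : Computable₂ R)
    {k x : α → ℕ} {c : α → ℕ → Bool} (hk : Computable k) (hc : Computable₂ c)
    (hx : Computable x) : Computable fun a => _root_.dyadicStep R (k a) (c a) (x a) := by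
  have h2k : Computable fun a => 2 ^ k a := Primrec.nat_pow.to_comp.comp (const 2) hk
  have h2k1 : Computable fun a => 2 ^ (k a + 1) :=
    Primrec.nat_pow.to_comp.comp (const 2) (succ.comp hk)
  have hbase : Computable fun a => x a / 2 ^ (k a + 1) * 2 ^ (k a + 1) :=
    Primrec.nat_mul.to_comp.comp (Primrec.nat_div.to_comp.comp hx h2k1) h2k1
  have hlower : Computable fun a => decide (x a < x a / 2 ^ (k a + 1) * 2 ^ (k a + 1) + 2 ^ k a) :=
    Primrec.nat_lt.decide.to_comp.comp hx (Primrec.nat_add.to_comp.comp hbase h2k)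
  have hcx : Computable fun a => c a (x a) := hc.comp Computable.id hx
  have hcy : Computable fun a => c a (x a / 2 ^ (k a + 1) * 2 ^ (k a + 1) +
      R (k a) (x a / 2 ^ (k a + 1) * 2 ^ (k a + 1))) :=
    hc.comp Computable.id (Primrec.nat_add.to_comp.comp hbase (hR.comp hk hbase))
  refine (Computable.cond hlower hcx (Primrec.beq.to_comp.comp hcx hcy)).of_eq fun a => ?_
  simp [_root_.dyadicStep]

theorem colorTable_computable (hR : Computable₂ R) : Computable₂ (colorTable R) := by
  have hbase : Computable fun p : ℕ × ℕ => (List.range p.1).map (dyadicColor R 0) :=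
    Computable.list_map_range Computable.fst (Computable.const false)
  have hstep : Computable₂ fun (p : ℕ × ℕ) (q : ℕ × List Bool) =>
      (List.range p.1).map (dyadicStep R q.1 fun y => q.2.getD y false) :=
    Computable.list_map_range (Computable.fst.comp Computable.fst)
      (Computable.dyadicStep hR (Computable.fst.comp (Computable.snd.comp Computable.fst))
        ((Primrec.list_getD false).to_comp.comp
          (Computable.snd.comp (Computable.snd.comp (Computable.fst.comp Computable.fst)))
          Computable.snd)
        Computable.snd)
  refine (Computable.nat_rec Computable.snd hbase hstep).to₂.of_eq fun p => ?_
  induction p.2 with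
  | zero => rfl
  | succ k ih => simp only [colorTable, ← ih]

theorem dyadicColor_computable (hR : Computable₂ R) (hRhi : ∀ n w, R n w < 2 ^ (n + 1)) :
    Computable₂ (dyadicColor R) := by
  have hN : Computable fun p : ℕ × ℕ => 2 ^ p.1 * (p.2 + 1) :=
    Primrec.nat_mul.to_comp.comp (Primrec.nat_pow.to_comp.comp (Computable.const 2) Computable.fst)
      (Computable.succ.comp Computable.snd)
  refine ((Primrec.list_getD false).to_comp.comp
    ((colorTable_computable hR).comp hN Computable.fst) Computable.snd).to₂.of_eq fun p => ?_
  have hx : p.2 < 2 ^ p.1 * (p.2 + 1) :=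
    lt_of_lt_of_le p.2.lt_succ_self (Nat.le_mul_of_pos_left _ (by positivity))
  simp [colorTable_eq hRhi (Nat.dvd_mul_right _ _), List.getD_eq_getElem?_getD, hx]

end DyadicColor

theorem stmt0 (R : ℕ → ℕ → ℕ) (hR : Computable₂ R)
    (hRB : ∀ n w, R n w ∈ Bset n) :
    ∃ c : ℕ → Bool, Computable c ∧
      ∀ w : ℕ, 0 < w → ∀ n < lam w, c w ≠ c (R n w + w) := by
  have hRlo : ∀ n w, 2 ^ n ≤ R n w := fun n w => (mem_Bset_iff.1 (hRB n w)).1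
  have hRhi : ∀ n w, R n w < 2 ^ (n + 1) := fun n w => (mem_Bset_iff.1 (hRB n w)).2
  refine ⟨fun x => dyadicColor R x x,
    (dyadicColor_computable hR hRhi).comp Computable.id Computable.id, fun w _ n hn => ?_⟩
  have hw : 2 ^ (n + 1) ∣ w := (pow_dvd_pow 2 hn).trans pow_padicValNat_dvd
  have hv : w + R n w < 0 + 2 ^ (w + R n w) := by
    have := Nat.lt_two_pow_self (n := w + R n w)
    omega
  beta_reduce
  rw [add_comm (R n w) w, ← dyadicColor_eq_of_lt_two_pow Nat.lt_two_pow_self (K := w + R n w)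
    (Nat.le_add_right w _)]
  exact dyadicColor_ne hRlo hRhi (dvd_zero _) (Nat.zero_le w) hv hw
end

section
/- Let A ⊆ ℤ⁺ be an infinite set with weak apartness and let Ã : ℕ³ → {0,1} satisfy lim_k lim_s Ã(x,k,s) = χ_A(x) for every x. Define, for n ∈ ℕ and positive integers w, R(n,w) = min({x ∈ B^n : Ã(x, λ(w), μ(w)) = 1} ∪ {2^{n+1} − 1}). Then there exist x, w₁, w₂ ∈ A with x ≪ w₁ ≪ w₂ and R(μ(x), w₁ + w₂) = x. -/
/-!
Pick any `x ∈ A`. Since only finitely many `y ≤ x` matter, the double limit is uniform on them: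
for `k` large and then `s` large, `Ã(y, k, s) = χ_A(y)` for all `y ≤ x`. Weak apartness makes
the values `λ(w)`, `w ∈ A`, unbounded (each fibre of `λ` on `A` has at most two points), so we
can choose `w₁ ∈ A` with `λ(w₁)` beyond `μ(x)` and the threshold for `k`, and then `w₂ ∈ A` with
`λ(w₂)` beyond `μ(w₁)` and the threshold for `s`. For `x ≪ w₁ ≪ w₂` the binary digits do not
interact: `λ(w₁ + w₂) = λ(w₁)` and `μ(w₁ + w₂) = μ(w₂) ≥ λ(w₂)`, so `R(μ(x), w₁ + w₂)` is
computed from the correct values `χ_A(y)`, `y ≤ x`, and the minimum is `x`, the unique element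
of `A ∩ B^{μ(x)}`.
-/

open Filter

lemma lam_le_mu {x : ℕ} (hx : 0 < x) : lam x ≤ mu x :=
  (Nat.le_log_iff_pow_le one_lt_two hx.ne').mpr (Nat.le_of_dvd hx pow_padicValNat_dvd)

lemma lt_two_pow_of_mu_lt {a n : ℕ} (h : mu a < n) : a < 2 ^ n :=
  (Nat.lt_pow_succ_log_self one_lt_two a).trans_le (Nat.pow_le_pow_right two_pos h)

lemma mu_add_of_mu_lt_lam {a b : ℕ} (h : mu a < lam b) : mu (a + b) = mu b := by
  have hb : 0 < b := Nat.pos_of_ne_zero fun hb => by simp [hb, lam] at h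
  have hbN : b < 2 ^ (mu b + 1) := Nat.lt_pow_succ_log_self one_lt_two b
  have hdN : 2 ^ lam b ∣ 2 ^ (mu b + 1) := pow_dvd_pow 2 ((lam_le_mu hb).trans (Nat.le_succ _))
  -- `b` and `2 ^ (μ b + 1)` are both multiples of `2 ^ λ b`, so they are at least that far apart.
  have hgap : 2 ^ lam b ≤ 2 ^ (mu b + 1) - b :=
    Nat.le_of_dvd (Nat.sub_pos_of_lt hbN) (Nat.dvd_sub hdN pow_padicValNat_dvd)
  have ha : a < 2 ^ lam b := lt_two_pow_of_mu_lt h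
  refine (Nat.log_eq_iff (Or.inr ⟨one_lt_two, by omega⟩)).mpr ⟨?_, by omega⟩
  exact (Nat.pow_log_le_self 2 hb.ne').trans (Nat.le_add_left b a)

lemma lam_add_of_lam_lt {a b : ℕ} (ha : a ≠ 0) (hb : b ≠ 0) (h : lam a < lam b) :
    lam (a + b) = lam a := by
  unfold lam at h ⊢
  have hval := padicValRat.add_eq_of_lt (p := 2) (q := a) (r := b) (by norm_cast; omega)
    (by exact_mod_cast ha) (by exact_mod_cast hb) (by simpa [padicValRat.of_nat] using h)
  rw [← Nat.cast_add, padicValRat.of_nat, padicValRat.of_nat] at hval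
  exact_mod_cast hval

lemma Set.finite_of_forall_eq_or_eq_or_eq {α : Type*} {S : Set α}
    (h : ∀ x ∈ S, ∀ y ∈ S, ∀ z ∈ S, x = y ∨ x = z ∨ y = z) : S.Finite := by
  classical
  by_contra hS
  obtain ⟨t, htS, ht⟩ := Set.Infinite.exists_subset_card_eq hS 3
  obtain ⟨x, y, z, hxy, hxz, hyz, rfl⟩ := Finset.card_eq_three.mp ht
  rcases h x (htS (by simp)) y (htS (by simp)) z (htS (by simp)) with h' | h' | h' <;>
    contradiction

lemma WeakApart.exists_lam_gt {A : Set ℕ} (hinf : A.Infinite) (hwa : WeakApart A) (N : ℕ) :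
    ∃ w ∈ A, N < lam w := by
  by_contra! h
  have hcover : A ⊆ ⋃ l ∈ Set.Iic N, {y ∈ A | lam y = l} := fun x hx =>
    Set.mem_biUnion (h x hx) ⟨hx, rfl⟩
  refine hinf (((Set.finite_Iic N).biUnion fun l _ => ?_).subset hcover)
  exact Set.finite_of_forall_eq_or_eq_or_eq fun x hx y hy z hz =>
    hwa.2 l x hx.1 y hy.1 z hz.1 hx.2 hy.2 hz.2

lemma eventually_eventually_of_iterated_limit {α : Type*} {f : ℕ → ℕ → α} {a : α}
    (h : ∃ K, ∀ k > K, ∃ S, ∀ s > S, f k s = a) :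
    ∀ᶠ k in atTop, ∀ᶠ s in atTop, f k s = a := by
  obtain ⟨K, hK⟩ := h
  filter_upwards [eventually_gt_atTop K] with k hk
  obtain ⟨S, hS⟩ := hK k hk
  exact (eventually_gt_atTop S).mono hS

lemma sInf_Bset_approx_eq {A : Set ℕ} {f : ℕ → ℕ} {x : ℕ} (hxA : x ∈ A) (hx : 0 < x)
    (hA : (A ∩ Bset (mu x)).Subsingleton) (hf : ∀ y ≤ x, f y = A.indicator (fun _ => 1) y) :
    sInf ({y | y ∈ Bset (mu x) ∧ f y = 1} ∪ {2 ^ (mu x + 1) - 1}) = x := by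
  have hfx : f x = 1 := by rw [hf x le_rfl, Set.indicator_of_mem hxA]
  refine IsLeast.csInf_eq ⟨Or.inl ⟨⟨hx, rfl⟩, hfx⟩, ?_⟩
  rintro y (⟨hyB, hfy⟩ | hy)
  · by_contra! hyx
    have hyA : y ∈ A := by
      by_contra hyA
      rw [hf y hyx.le, Set.indicator_of_notMem hyA] at hfy
      exact zero_ne_one hfy
    exact hyx.ne (hA ⟨hyA, hyB⟩ ⟨hxA, hx, rfl⟩)
  · have hxN : x < 2 ^ (mu x + 1) := Nat.lt_pow_succ_log_self one_lt_two x
    rw [Set.mem_singleton_iff] at hy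
    omega

theorem stmt2_general (A : Set ℕ) (hpos : ∀ x ∈ A, 0 < x) (hinf : A.Infinite)
    (hwa : WeakApart A)
    (tA : ℕ → ℕ → ℕ → ℕ)
    (hlim : ∀ x, ∃ K, ∀ k > K, ∃ S, ∀ s > S, tA x k s = A.indicator (fun _ => 1) x)
    (R : ℕ → ℕ → ℕ)
    (hR : ∀ n w, R n w =
      sInf ({x | x ∈ Bset n ∧ tA x (lam w) (mu w) = 1} ∪ {2 ^ (n + 1) - 1})) :
    ∃ x ∈ A, ∃ w₁ ∈ A, ∃ w₂ ∈ A,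
      mu x < lam w₁ ∧ mu w₁ < lam w₂ ∧ R (mu x) (w₁ + w₂) = x := by
  obtain ⟨x, hxA⟩ := hinf.nonempty
  have huniform : ∀ᶠ k in atTop, ∀ᶠ s in atTop,
      ∀ y ∈ Finset.range (x + 1), tA y k s = A.indicator (fun _ => 1) y := by
    filter_upwards [(eventually_all_finset _).mpr fun y _ =>
      eventually_eventually_of_iterated_limit (hlim y)] with k hk
    exact (eventually_all_finset _).mpr hk
  obtain ⟨K, hK⟩ := eventually_atTop.mp huniform
  obtain ⟨w₁, hw₁A, hw₁⟩ := hwa.exists_lam_gt hinf (max (mu x) K)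
  obtain ⟨S, hS⟩ := eventually_atTop.mp (hK (lam w₁) (by omega))
  obtain ⟨w₂, hw₂A, hw₂⟩ := hwa.exists_lam_gt hinf (max (mu w₁) S)
  have hw₁0 := hpos w₁ hw₁A
  have hw₂0 := hpos w₂ hw₂A
  have hlam₁₂ : lam w₁ < lam w₂ := by have := lam_le_mu hw₁0; omega
  refine ⟨x, hxA, w₁, hw₁A, w₂, hw₂A, by omega, by omega, ?_⟩
  rw [hR, lam_add_of_lam_lt hw₁0.ne' hw₂0.ne' hlam₁₂, mu_add_of_mu_lt_lam (by omega)]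
  exact sInf_Bset_approx_eq hxA (hpos x hxA) (hwa.1 _) fun y hy =>
    hS _ (by have := lam_le_mu hw₂0; omega) y (Finset.mem_range_succ_iff.mpr hy)

theorem stmt2 (A : Set ℕ) (hpos : ∀ x ∈ A, 0 < x) (hinf : A.Infinite)
    (hwa : WeakApart A)
    (tA : ℕ → ℕ → ℕ → ℕ) (htA01 : ∀ x k s, tA x k s ≤ 1)
    (hlim : ∀ x, ∃ K, ∀ k > K, ∃ S, ∀ s > S, tA x k s = A.indicator (fun _ => 1) x)
    (R : ℕ → ℕ → ℕ)
    (hR : ∀ n w, R n w =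
      sInf ({x | x ∈ Bset n ∧ tA x (lam w) (mu w) = 1} ∪ {2 ^ (n + 1) - 1})) :
    ∃ x ∈ A, ∃ w₁ ∈ A, ∃ w₂ ∈ A,
      mu x < lam w₁ ∧ mu w₁ < lam w₂ ∧ R (mu x) (w₁ + w₂) = x :=
  stmt2_general A hpos hinf hwa tA hlim R hR
end

section
/- Let A ⊆ ℤ⁺ be an infinite set with weak apartness, let Ã : ℕ³ → {0,1} satisfy lim_k lim_s Ã(x,k,s) = χ_A(x) for every x, and let i ∈ ℕ. For n, k, s define a(n,k,s) = max{Ã(x,k,s) : x ∈ B^n}, and let C(k,s) be the set of the first 2^i numbers n with i < n < s and a(n,k,s) = 1 (or all such n if there are fewer than 2^i). Then lim_k lim_s C(k,s) exists and equals the set consisting of the first 2^i numbers n > i such that B^n ∩ A ≠ ∅; in particular this limit is a finite set of size exactly 2^i. -/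
theorem stmt3 (A : Set ℕ) (hpos : ∀ x ∈ A, 0 < x) (hinf : A.Infinite)
    (hwa : WeakApart A)
    (tA : ℕ → ℕ → ℕ → ℕ) (htA01 : ∀ x k s, tA x k s ≤ 1)
    (hlim : ∀ x, ∃ K, ∀ k > K, ∃ S, ∀ s > S, tA x k s = A.indicator (fun _ => 1) x)
    (i : ℕ)
    (a : ℕ → ℕ → ℕ → ℕ)
    (ha : ∀ n k s, (a n k s = 1 ↔ ∃ x ∈ Bset n, tA x k s = 1) ∧ a n k s ≤ 1)
    (C : ℕ → ℕ → Finset ℕ)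
    (hC : ∀ k s, C k s =
      ((Finset.Ico (i + 1) s).filter fun n => a n k s = 1).filter fun n =>
        (((Finset.Ico (i + 1) s).filter fun m => a m k s = 1).filter
          fun m => m ≤ n).card ≤ 2 ^ i) :
    ∃ C₀ : Finset ℕ,
      C₀.card = 2 ^ i ∧
      (∀ n ∈ C₀, i < n ∧ (A ∩ Bset n).Nonempty) ∧
      (∀ n, i < n → (A ∩ Bset n).Nonempty → n ∉ C₀ → ∀ m ∈ C₀, m < n) ∧
      ∃ K, ∀ k > K, ∃ S, ∀ s > S, C k s = C₀ := by
  classical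
  -- the set of "true hit" indices
  set T : Set ℕ := {n | i < n ∧ (A ∩ Bset n).Nonempty} with hT
  have hinjOn : Set.InjOn mu A := by
    intro x hx y hy hxy
    exact hwa.1 (mu x) ⟨hx, hpos x hx, rfl⟩ ⟨hy, hpos y hy, hxy.symm⟩
  have hTinf : T.Infinite := by
    have h1 : (mu '' A).Infinite := hinf.image hinjOn
    have h2 : ((mu '' A) \ Set.Iic i).Infinite := h1.diff (Set.finite_Iic i)
    refine Set.Infinite.mono ?_ h2
    rintro n ⟨⟨x, hx, rfl⟩, hn⟩
    exact ⟨lt_of_not_ge (fun h => hn h), ⟨x, hx, hpos x hx, rfl⟩⟩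
  haveI : Infinite T := hTinf.to_subtype
  set f : ℕ → ℕ := fun j => ((Nat.Subtype.orderIsoOfNat T) j : ℕ) with hfdef
  have hfmono : StrictMono f := fun u v huv => (Nat.Subtype.orderIsoOfNat T).strictMono huv
  have hfT : ∀ j, f j ∈ T := fun j => ((Nat.Subtype.orderIsoOfNat T) j).2
  have hfsurj : ∀ n ∈ T, ∃ j, f j = n := by
    intro n hn
    exact ⟨(Nat.Subtype.orderIsoOfNat T).symm ⟨n, hn⟩,
      congrArg Subtype.val ((Nat.Subtype.orderIsoOfNat T).apply_symm_apply ⟨n, hn⟩)⟩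
  set C₀ : Finset ℕ := (Finset.range (2 ^ i)).image f with hC₀
  have hcard : C₀.card = 2 ^ i := by
    rw [hC₀, Finset.card_image_of_injective _ hfmono.injective, Finset.card_range]
  have hmem : ∀ n ∈ C₀, i < n ∧ (A ∩ Bset n).Nonempty := by
    intro n hn
    rw [hC₀, Finset.mem_image] at hn
    obtain ⟨j, _, rfl⟩ := hn
    exact hfT j
  have hleast : ∀ n, i < n → (A ∩ Bset n).Nonempty → n ∉ C₀ → ∀ m ∈ C₀, m < n := by
    intro n hni hne hn m hm
    obtain ⟨j, rfl⟩ := hfsurj n ⟨hni, hne⟩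
    rw [hC₀, Finset.mem_image] at hm
    obtain ⟨j', hj', rfl⟩ := hm
    rw [Finset.mem_range] at hj'
    have : ¬ j < 2 ^ i := fun h => hn (by
      rw [hC₀, Finset.mem_image]; exact ⟨j, Finset.mem_range.2 h, rfl⟩)
    exact hfmono (lt_of_lt_of_le hj' (le_of_not_gt this))
  refine ⟨C₀, hcard, hmem, hleast, ?_⟩
  -- N = max of C₀
  have hC₀ne : C₀.Nonempty := Finset.card_pos.mp (by rw [hcard]; positivity)
  set N : ℕ := C₀.max' hC₀ne with hN
  have hNmem : N ∈ C₀ := C₀.max'_mem hC₀ne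
  have hNmax : ∀ m ∈ C₀, m ≤ N := fun m hm => C₀.le_max' m hm
  -- characterization: for i < n ≤ N, nonempty ↔ n ∈ C₀
  have hchar : ∀ n, i < n → n ≤ N → ((A ∩ Bset n).Nonempty ↔ n ∈ C₀) := by
    intro n hni hnN
    constructor
    · intro hne
      by_contra hn
      exact absurd hnN (not_le.2 (hleast n hni hne hn N hNmem))
    · intro hn; exact (hmem n hn).2
  -- choose K
  set Kf : ℕ → ℕ := fun x => (hlim x).choose with hKf
  set K : ℕ := (Finset.range (2 ^ (N + 1))).sup Kf with hK
  refine ⟨K, ?_⟩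
  intro k hk
  have hkx : ∀ x < 2 ^ (N + 1), Kf x < k := by
    intro x hx
    exact lt_of_le_of_lt (Finset.le_sup (Finset.mem_range.2 hx)) hk
  set g : ℕ → ℕ := fun x => if h : Kf x < k then ((hlim x).choose_spec k h).choose else 0
    with hg
  set S : ℕ := max N ((Finset.range (2 ^ (N + 1))).sup g) with hS
  refine ⟨S, ?_⟩
  intro s hs
  have hNs : N < s := lt_of_le_of_lt (le_max_left _ _) hs
  have hstab : ∀ x < 2 ^ (N + 1), tA x k s = A.indicator (fun _ => 1) x := by
    intro x hx
    have h1 : Kf x < k := hkx x hx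
    have h2 : g x < s := by
      refine lt_of_le_of_lt ?_ hs
      exact le_trans (Finset.le_sup (Finset.mem_range.2 hx)) (le_max_right _ _)
    have := ((hlim x).choose_spec k h1).choose_spec s (by
      rw [hg] at h2; simpa [h1] using h2)
    exact this
  -- elements of Bset n for n ≤ N are < 2^(N+1)
  have hBlt : ∀ n ≤ N, ∀ x ∈ Bset n, x < 2 ^ (N + 1) := by
    intro n hn x hxB
    obtain ⟨hx0, hxmu⟩ := hxB
    have : x < 2 ^ (mu x + 1) := Nat.lt_pow_succ_log_self (by norm_num) x
    calc x < 2 ^ (n + 1) := by rwa [hxmu] at this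
      _ ≤ 2 ^ (N + 1) := Nat.pow_le_pow_right (by norm_num) (by omega)
  -- a n k s correct for n ≤ N
  have ha' : ∀ n ≤ N, (a n k s = 1 ↔ (A ∩ Bset n).Nonempty) := by
    intro n hn
    rw [(ha n k s).1]
    constructor
    · rintro ⟨x, hxB, hxt⟩
      have hxA : x ∈ A := by
        by_contra hxA
        rw [hstab x (hBlt n hn x hxB), Set.indicator_of_notMem hxA] at hxt
        exact absurd hxt (by norm_num)
      exact ⟨x, hxA, hxB⟩
    · rintro ⟨x, hxA, hxB⟩
      refine ⟨x, hxB, ?_⟩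
      rw [hstab x (hBlt n hn x hxB), Set.indicator_of_mem hxA]
  -- the hit set
  set H : Finset ℕ := (Finset.Ico (i + 1) s).filter (fun n => a n k s = 1) with hH
  have hC₀H : ∀ m ∈ C₀, m ∈ H := by
    intro m hm
    obtain ⟨hmi, hmne⟩ := hmem m hm
    rw [hH, Finset.mem_filter, Finset.mem_Ico]
    exact ⟨⟨hmi, lt_of_le_of_lt (hNmax m hm) hNs⟩, (ha' m (hNmax m hm)).2 hmne⟩
  have hHC₀ : ∀ m ∈ H, m ≤ N → m ∈ C₀ := by
    intro m hm hmN
    rw [hH, Finset.mem_filter, Finset.mem_Ico] at hm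
    exact (hchar m (by omega) hmN).1 ((ha' m hmN).1 hm.2)
  rw [hC k s, ← hH]
  ext n
  rw [Finset.mem_filter]
  constructor
  · rintro ⟨hnH, hncard⟩
    by_contra hn
    have hnN : N < n := by
      by_contra h
      exact hn (hHC₀ n hnH (le_of_not_gt h))
    have hsub : insert n C₀ ⊆ H.filter (fun m => m ≤ n) := by
      intro m hm
      rw [Finset.mem_insert] at hm
      rw [Finset.mem_filter]
      rcases hm with rfl | hm
      · exact ⟨hnH, le_refl _⟩
      · exact ⟨hC₀H m hm, le_of_lt (lt_of_le_of_lt (hNmax m hm) hnN)⟩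
    have := Finset.card_le_card hsub
    rw [Finset.card_insert_of_notMem hn, hcard] at this
    omega
  · intro hn
    refine ⟨hC₀H _ hn, ?_⟩
    have hsub : H.filter (fun m => m ≤ n) ⊆ C₀ := by
      intro m hm
      rw [Finset.mem_filter] at hm
      exact hHC₀ m hm.1 (le_trans hm.2 (hNmax n hn))
    calc (H.filter (fun m => m ≤ n)).card ≤ C₀.card := Finset.card_le_card hsub
      _ = 2 ^ i := hcard
end

section
/- For every infinite set A ⊆ ℤ⁺ there exists an infinite set B ⊆ ℤ⁺ such that B is Turing reducible to A, B has apartness, and FS(B) ⊆ FS(A). -/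
/-- A set `A ⊆ ℤ⁺` has apartness if `μ(x) < λ(y)` for all `x < y` in `A`. -/
def Apart (A : Set ℕ) : Prop := ∀ x ∈ A, ∀ y ∈ A, x < y → mu x < lam y

/-- Partial recursiveness relative to an oracle `g : ℕ →. ℕ`; this is `Nat.Partrec`
augmented with an oracle clause. -/
inductive OracleRecursiveIn (g : ℕ →. ℕ) : (ℕ →. ℕ) → Prop
  | zero : OracleRecursiveIn g (pure 0)
  | succ : OracleRecursiveIn g Nat.succ
  | left : OracleRecursiveIn g ↑fun n : ℕ => n.unpair.1
  | right : OracleRecursiveIn g ↑fun n : ℕ => n.unpair.2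
  | oracle : OracleRecursiveIn g g
  | pair {f h : ℕ →. ℕ} : OracleRecursiveIn g f → OracleRecursiveIn g h →
      OracleRecursiveIn g fun n => Nat.pair <$> f n <*> h n
  | comp {f h : ℕ →. ℕ} : OracleRecursiveIn g f → OracleRecursiveIn g h →
      OracleRecursiveIn g fun n => h n >>= f
  | prec {f h : ℕ →. ℕ} : OracleRecursiveIn g f → OracleRecursiveIn g h →
      OracleRecursiveIn g (Nat.unpaired fun a n =>
        n.rec (f a) fun y IH => do let i ← IH; h (Nat.pair a (Nat.pair y i)))
  | rfind {f : ℕ →. ℕ} : OracleRecursiveIn g f →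
      OracleRecursiveIn g fun a => Nat.rfind fun n => (fun m => m = 0) <$> f (Nat.pair a n)

/-- The characteristic function of a set of naturals, as a partial function. -/
noncomputable def chi (A : Set ℕ) : ℕ →. ℕ :=
  fun n => Part.some (A.indicator (fun _ => 1) n)

/-- `B` is Turing reducible to `A`: the characteristic function of `B` is
computable relative to the oracle `A`. -/
def TuringRed (B A : Set ℕ) : Prop := OracleRecursiveIn (chi A) (chi B)

/-!
Read `A` in increasing order and cut it into consecutive runs. If `e` is the previous block
(initially `0`), keep reading until some final run of the elements read since that block has
sum divisible by `2 ^ e`; that sum is the next block, and the unused elements before the run are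
discarded. Two of any `2 ^ e + 1` prefix sums agree modulo `2 ^ e`, so a new block appears within
`2 ^ e` steps and there are infinitely many blocks. Each block `b` is divisible by `2 ^ e` where
`e` is the previous block, and `e` exceeds `mu` of every earlier block; hence the blocks are apart.
They are sums of pairwise disjoint sets of elements of `A`, so `FS B ⊆ FS A`. Finally a block is
at least the element that completes it, so whether `n` is a block is decided by running the
construction on `A ∩ [0, n]`, which is computable from `A`.
-/

theorem le_lam_of_two_pow_dvd {e b : ℕ} (hb : b ≠ 0) (h : 2 ^ e ∣ b) : e ≤ lam b :=
  (padicValNat_dvd_iff_le (p := 2) hb).1 h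

theorem lt_of_mu_lt_lam {u v : ℕ} (hv : 0 < v) (h : mu u < lam v) : u < v :=
  calc u < 2 ^ (mu u + 1) := Nat.lt_pow_succ_log_self one_lt_two u
    _ ≤ 2 ^ lam v := Nat.pow_le_pow_right two_pos h
    _ ≤ v := Nat.le_of_dvd hv pow_padicValNat_dvd

def ApartChain (e : ℕ) (l : List ℕ) : Prop :=
  (∀ u ∈ l, 0 < u ∧ mu u < e) ∧ l.Pairwise fun u v => mu u < lam v

theorem apartChain_nil : ApartChain 0 [] := by simp [ApartChain]

theorem ApartChain.concat {e b : ℕ} {l : List ℕ} (h : ApartChain e l) (hb : 0 < b)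
    (hdvd : 2 ^ e ∣ b) : ApartChain b (l ++ [b]) := by
  have he : e < b := (Nat.lt_two_pow_self).trans_le (Nat.le_of_dvd hb hdvd)
  have hlam : e ≤ lam b := le_lam_of_two_pow_dvd hb.ne' hdvd
  refine ⟨?_, List.pairwise_append.2 ⟨h.2, List.pairwise_singleton _ _, ?_⟩⟩
  · simp only [List.mem_append, List.mem_singleton]
    rintro u (hu | rfl)
    · exact ⟨(h.1 u hu).1, (h.1 u hu).2.trans he⟩
    · exact ⟨hb, Nat.log_lt_self 2 hb.ne'⟩
  · simp only [List.mem_singleton]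
    rintro u hu _ rfl
    exact (h.1 u hu).2.trans_le hlam

theorem ApartChain.pairwise_lt {e : ℕ} {l : List ℕ} (h : ApartChain e l) :
    l.Pairwise (· < ·) :=
  h.2.imp_of_mem fun _ hv huv => lt_of_mu_lt_lam (h.1 _ hv).1 huv

theorem ApartChain.apart {e : ℕ} {l : List ℕ} (h : ApartChain e l) : Apart {u | u ∈ l} := by
  let R (u v : ℕ) : Prop := (u < v → mu u < lam v) ∧ (v < u → mu v < lam u)
  have : Std.Symm R := ⟨fun _ _ huv => huv.symm⟩
  have hR : l.Pairwise R := (h.2.and h.pairwise_lt).imp fun huv =>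
    ⟨fun _ => huv.1, fun hvu => absurd huv.2 hvu.not_gt⟩
  intro u hu v hv huv
  exact (hR.forall hu hv huv.ne).1 huv

def NoDvdSegment (n : ℕ) (l : List ℕ) : Prop :=
  ∀ i j, i < j → j ≤ l.length → ¬ n ∣ ((l.take j).drop i).sum

theorem NoDvdSegment.nil (n : ℕ) : NoDvdSegment n [] := by
  intro i j hij hj
  simp only [List.length_nil] at hj
  omega

/-- Pigeonhole: two of the `l.length + 1` prefix sums of `l` agree modulo `n`. -/
theorem NoDvdSegment.length_lt {n : ℕ} {l : List ℕ} (h : NoDvdSegment n l) (hn : 0 < n) :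
    l.length < n := by
  by_contra! hl
  obtain ⟨i, hi, j, hj, hij, hmod⟩ := Finset.exists_ne_map_eq_of_card_lt_of_maps_to
    (s := Finset.range (l.length + 1)) (t := Finset.range n)
    (f := fun i => (l.take i).sum % n) (by simpa using Nat.lt_succ_of_le hl)
    (fun i _ => by simpa using Nat.mod_lt _ hn)
  rw [Finset.mem_range] at hi hj
  have key : ∀ i j, i < j → j < l.length + 1 →
      (l.take i).sum % n = (l.take j).sum % n → False := by
    intro i j hij hj hmod
    have hsplit : (l.take j).sum = (l.take i).sum + ((l.take j).drop i).sum := by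
      rw [← List.sum_take_add_sum_drop (l.take j) i, List.take_take, min_eq_left hij.le]
    refine h i j hij (by omega) ?_
    have := (Nat.modEq_iff_dvd' (hsplit ▸ Nat.le_add_right _ _)).1 hmod
    rwa [hsplit, Nat.add_sub_cancel_left] at this
  rcases Nat.lt_or_gt_of_ne hij with hlt | hlt
  · exact key i j hlt hj hmod
  · exact key j i hlt hi hmod.symm

theorem NoDvdSegment.concat {n x : ℕ} {l : List ℕ} (h : NoDvdSegment n l)
    (hx : ∀ k ≤ l.length, ¬ n ∣ (l.drop k ++ [x]).sum) : NoDvdSegment n (l ++ [x]) := by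
  intro i j hij hj
  rw [List.length_append, List.length_singleton] at hj
  rcases Nat.lt_or_eq_of_le hj with hj | rfl
  · rw [List.take_append_of_le_length (by omega)]
    exact h i j hij (by omega)
  · rw [List.take_of_length_le (by simp), List.drop_append_of_le_length (by omega)]
    exact hx i (by omega)

theorem FS_mono {A A' : Set ℕ} (h : A ⊆ A') : FS A ⊆ FS A' :=
  fun _ ⟨F, hF, hne, hsum⟩ => ⟨F, hF.trans h, hne, hsum⟩

theorem FS_image_sum_subset {ι : Type*} {I : Set ι} (F : ι → Finset ℕ)
    (hdisj : I.PairwiseDisjoint F) (hne : ∀ i ∈ I, (F i).Nonempty)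
    (hinj : I.InjOn fun i => (F i).sum id) :
    FS ((fun i => (F i).sum id) '' I) ⊆ FS (⋃ i ∈ I, (F i : Set ℕ)) := by
  classical
  rintro _ ⟨S, hS, hSne, rfl⟩
  obtain ⟨J, hJI, rfl⟩ := Finset.subset_set_image_iff.1 hS
  refine ⟨J.biUnion F, ?_, ?_, ?_⟩
  · intro a ha
    obtain ⟨i, hi, hai⟩ := Finset.mem_biUnion.1 ha
    exact Set.mem_biUnion (hJI hi) hai
  · obtain ⟨i, hi⟩ := Finset.image_nonempty.1 hSne
    exact (hne i (hJI hi)).mono (Finset.subset_biUnion_of_mem F hi)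
  · rw [Finset.sum_biUnion (hdisj.subset hJI), Finset.sum_image (hinj.mono hJI)]
    rfl

theorem FS_sums_subset {segs : List (List ℕ)} (hnd : segs.flatten.Nodup)
    (hsum : (segs.map List.sum).Nodup) (hne : ∀ l ∈ segs, l ≠ []) :
    FS {b | b ∈ segs.map List.sum} ⊆ FS {a | a ∈ segs.flatten} := by
  classical
  obtain ⟨hnd_mem, hdisj⟩ := List.nodup_flatten.1 hnd
  have hsum_eq : ∀ l ∈ segs, l.toFinset.sum id = l.sum := fun l hl => by
    simp [List.sum_toFinset _ (hnd_mem l hl)]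
  have himage : {b | b ∈ segs.map List.sum} =
      (fun l => l.toFinset.sum id) '' {l | l ∈ segs} := by
    ext b
    simp only [List.mem_map, Set.mem_ofPred_eq, Set.mem_image]
    exact exists_congr fun l => and_congr_right fun hl => by rw [hsum_eq l hl]
  have hunion :
      (⋃ l ∈ {l | l ∈ segs}, (l.toFinset : Set ℕ)) = {a | a ∈ segs.flatten} := by
    ext a
    simp
  rw [himage, ← hunion]
  refine FS_image_sum_subset _ ?_ ?_ ?_
  · have : Std.Symm (List.Disjoint (α := ℕ)) := ⟨fun _ _ h => h.symm⟩
    intro l hl l' hl' hll'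
    simpa [Function.onFun, List.disjoint_toFinset_iff_disjoint] using hdisj.forall hl hl' hll'
  · intro l hl
    exact List.toFinset_nonempty_iff l |>.2 (hne l hl)
  · intro l hl l' hl' h
    simp only [Set.mem_ofPred_eq, hsum_eq l hl, hsum_eq l' hl'] at hl hl' h
    exact List.inj_on_of_nodup_map hsum hl hl' h

theorem Primrec.list_sum : Primrec (List.sum : List ℕ → ℕ) :=
  (Primrec.list_foldr Primrec.id (Primrec.const 0)
    (Primrec.nat_add.comp (Primrec.fst.comp Primrec.snd)
      (Primrec.snd.comp Primrec.snd)).to₂).of_eq fun _ => rfl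

namespace OracleRecursiveIn

variable {g : ℕ →. ℕ}

theorem of_partrec {f : ℕ →. ℕ} (h : Nat.Partrec f) : OracleRecursiveIn g f := by
  induction h with
  | zero => exact .zero
  | succ => exact .succ
  | left => exact .left
  | right => exact .right
  | pair _ _ ih₁ ih₂ => exact .pair ih₁ ih₂
  | comp _ _ ih₁ ih₂ => exact .comp ih₁ ih₂
  | prec _ _ ih₁ ih₂ => exact .prec ih₁ ih₂
  | rfind _ ih => exact .rfind ih

theorem of_eq {f f' : ℕ →. ℕ} (h : OracleRecursiveIn g f) (H : ∀ n, f n = f' n) :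
    OracleRecursiveIn g f' :=
  funext H ▸ h

theorem of_computable {F : ℕ → ℕ} (h : Computable F) : OracleRecursiveIn g F :=
  of_partrec (Partrec.nat_iff.1 h.partrec)

theorem comp_total {F G : ℕ → ℕ} (hF : OracleRecursiveIn g F) (hG : OracleRecursiveIn g G) :
    OracleRecursiveIn g ↑fun n => F (G n) :=
  of_eq (.comp hF hG) fun _ => Part.bind_some _ _

theorem pair_total {F G : ℕ → ℕ} (hF : OracleRecursiveIn g F) (hG : OracleRecursiveIn g G) :
    OracleRecursiveIn g ↑fun n => Nat.pair (F n) (G n) :=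
  of_eq (.pair hF hG) fun n => by simp [Seq.seq]

theorem nat_rec_total (c : ℕ) {H : ℕ → ℕ} (hH : OracleRecursiveIn g H) :
    OracleRecursiveIn g ↑fun n => (Nat.rec c (fun y IH => H (Nat.pair y IH)) n : ℕ) := by
  have hprec := OracleRecursiveIn.prec (of_computable (Computable.const c))
    (comp_total hH (of_computable (Primrec.to_comp (Primrec.snd.comp Primrec.unpair))))
  have hpair : Computable fun n : ℕ => Nat.pair 0 n :=
    (Primrec₂.natPair.comp (Primrec.const 0) Primrec.id).to_comp
  refine of_eq (.comp hprec (of_computable hpair)) fun n => ?_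
  simp only [PFun.coe_val, Part.bind_eq_bind, Part.bind_some, Nat.unpaired, Nat.unpair_pair]
  induction n with
  | zero => rfl
  | succ n ih => exact (congrArg (Part.bind · _) ih).trans (Part.bind_some _ _)

end OracleRecursiveIn

noncomputable def prefixMask (A : Set ℕ) : ℕ → ℕ
  | 0 => 0
  | n + 1 => prefixMask A n + A.indicator (fun _ => 1) n * 2 ^ n

theorem prefixMask_succ_of_mem {A : Set ℕ} {n : ℕ} (h : n ∈ A) :
    prefixMask A (n + 1) = 2 ^ n + prefixMask A n := by
  simp [prefixMask, h, add_comm]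

theorem prefixMask_succ_of_notMem {A : Set ℕ} {n : ℕ} (h : n ∉ A) :
    prefixMask A (n + 1) = prefixMask A n := by
  simp [prefixMask, h]

theorem prefixMask_lt (A : Set ℕ) (n : ℕ) : prefixMask A n < 2 ^ n := by
  induction n with
  | zero => simp [prefixMask]
  | succ n ih =>
    by_cases h : n ∈ A
    · rw [prefixMask_succ_of_mem h, pow_succ]
      omega
    · rw [prefixMask_succ_of_notMem h, pow_succ]
      omega

theorem testBit_prefixMask {A : Set ℕ} {i n : ℕ} (hi : i < n) :
    (prefixMask A n).testBit i ↔ i ∈ A := by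
  induction n with
  | zero => omega
  | succ n ih =>
    have htop : (prefixMask A n).testBit n = false := Nat.testBit_lt_two_pow (prefixMask_lt A n)
    rcases Nat.lt_succ_iff_lt_or_eq.1 hi with hi | rfl
    · by_cases h : n ∈ A
      · rw [prefixMask_succ_of_mem h, Nat.testBit_two_pow_add_gt hi, ih hi]
      · rw [prefixMask_succ_of_notMem h, ih hi]
    · by_cases h : i ∈ A
      · simp [prefixMask_succ_of_mem h, Nat.testBit_two_pow_add_eq, htop, h]
      · simp [prefixMask_succ_of_notMem h, htop, h]

theorem oracleRecursiveIn_prefixMask (A : Set ℕ) : OracleRecursiveIn (chi A) (prefixMask A) := by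
  have hind : OracleRecursiveIn (chi A) ↑(A.indicator fun _ => (1 : ℕ)) :=
    (OracleRecursiveIn.oracle : OracleRecursiveIn (chi A) (chi A))
  have hK : Computable fun p : ℕ =>
      p.unpair.2.unpair.2 + p.unpair.1 * 2 ^ p.unpair.2.unpair.1 := by
    have hy : Primrec fun p : ℕ => p.unpair.2.unpair.1 :=
      Primrec.fst.comp (Primrec.unpair.comp (Primrec.snd.comp Primrec.unpair))
    have hIH : Primrec fun p : ℕ => p.unpair.2.unpair.2 :=
      Primrec.snd.comp (Primrec.unpair.comp (Primrec.snd.comp Primrec.unpair))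
    exact (Primrec.nat_add.comp hIH (Primrec.nat_mul.comp (Primrec.fst.comp Primrec.unpair)
      (Primrec.nat_pow.comp (Primrec.const 2) hy))).to_comp
  have hfst :
      OracleRecursiveIn (chi A) ↑fun q : ℕ => A.indicator (fun _ => (1 : ℕ)) q.unpair.1 :=
    OracleRecursiveIn.comp_total hind
      (OracleRecursiveIn.of_computable (Primrec.fst.comp Primrec.unpair).to_comp)
  have hH : OracleRecursiveIn (chi A)
      ↑fun q : ℕ => q.unpair.2 + A.indicator (fun _ => (1 : ℕ)) q.unpair.1 * 2 ^ q.unpair.1 :=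
    OracleRecursiveIn.of_eq (OracleRecursiveIn.comp_total (OracleRecursiveIn.of_computable hK)
      (OracleRecursiveIn.pair_total hfst (OracleRecursiveIn.of_computable Computable.id)))
      fun q => by simp
  refine OracleRecursiveIn.of_eq (OracleRecursiveIn.nat_rec_total 0 hH) fun n => ?_
  simp only [PFun.coe_val, Nat.unpair_pair, Part.some_inj]
  induction n with
  | zero => rfl
  | succ n ih => rw [prefixMask, ← ih]

namespace BlockMachine

/-- A state `(e, pending, segments)`: `segments` are the consecutive runs of input already
turned into blocks, `pending` the input read since the last block, and the next block must be
divisible by `2 ^ e`. -/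
abbrev State := ℕ × List ℕ × List (List ℕ)

/-- The first `k < p.length` with `2 ^ e ∣ (p.drop k).sum`, or `p.length` if there is none. -/
def dvdSuffixIdx (e : ℕ) (p : List ℕ) : ℕ :=
  (List.range p.length).findIdx fun i => (p.drop i).sum % 2 ^ e = 0

def step (s : State) (x : ℕ) : State :=
  let p := s.2.1 ++ [x]
  let k := dvdSuffixIdx s.1 p
  if k < p.length then ((p.drop k).sum, [], s.2.2 ++ [p.drop k]) else (s.1, p, s.2.2)

def run (L : List ℕ) : State := L.foldl step (0, [], [])

def blocks (L : List ℕ) : List ℕ := (run L).2.2.map List.sum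

theorem run_concat (L : List ℕ) (x : ℕ) : run (L ++ [x]) = step (run L) x := by
  simp [run, List.foldl_append]

theorem dvd_sum_drop_dvdSuffixIdx {e : ℕ} {p : List ℕ} (h : dvdSuffixIdx e p < p.length) :
    2 ^ e ∣ (p.drop (dvdSuffixIdx e p)).sum := by
  unfold dvdSuffixIdx at h ⊢
  have hw : (List.range p.length).findIdx (fun i => (p.drop i).sum % 2 ^ e = 0) <
      (List.range p.length).length := by rwa [List.length_range]
  have := List.findIdx_getElem (w := hw)
  rw [List.getElem_range, decide_eq_true_eq] at this
  exact Nat.dvd_of_mod_eq_zero this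

theorem not_dvd_sum_drop {e k : ℕ} {p : List ℕ} (h : p.length ≤ dvdSuffixIdx e p)
    (hk : k < p.length) : ¬ 2 ^ e ∣ (p.drop k).sum := fun hdvd => by
  have := (List.findIdx_lt_length (p := fun i => decide ((p.drop i).sum % 2 ^ e = 0))
    (xs := List.range p.length)).2
      ⟨k, List.mem_range.2 hk, by simpa using Nat.mod_eq_zero_of_dvd hdvd⟩
  rw [List.length_range] at this
  exact absurd h (not_le.2 this)

theorem step_cases (s : State) (x : ℕ) :
    (step s x = (s.1, s.2.1 ++ [x], s.2.2) ∧
      ∀ k ≤ s.2.1.length, ¬ 2 ^ s.1 ∣ (s.2.1.drop k ++ [x]).sum) ∨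
    ∃ k ≤ s.2.1.length, 2 ^ s.1 ∣ (s.2.1.drop k ++ [x]).sum ∧
      step s x = ((s.2.1.drop k ++ [x]).sum, [], s.2.2 ++ [s.2.1.drop k ++ [x]]) := by
  obtain ⟨e, pend, segs⟩ := s
  have hdrop : ∀ k ≤ pend.length, (pend ++ [x]).drop k = pend.drop k ++ [x] :=
    fun k hk => List.drop_append_of_le_length hk
  by_cases hk : dvdSuffixIdx e (pend ++ [x]) < (pend ++ [x]).length
  · have hle : dvdSuffixIdx e (pend ++ [x]) ≤ pend.length :=
      Nat.le_of_lt_succ (by simpa using hk)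
    refine Or.inr ⟨_, hle, ?_, ?_⟩
    · rw [← hdrop _ hle]
      exact dvd_sum_drop_dvdSuffixIdx hk
    · simp only [step, if_pos hk, hdrop _ hle]
  · refine Or.inl ⟨by simp only [step, if_neg hk], fun k hk' => ?_⟩
    rw [← hdrop k hk']
    exact not_dvd_sum_drop (not_lt.1 hk) (by simpa using Nat.lt_succ_of_le hk')

theorem segments_prefix_foldl (T : List ℕ) (s : State) : s.2.2 <+: (T.foldl step s).2.2 := by
  induction T generalizing s with
  | nil => exact List.prefix_refl _
  | cons x T ih =>
    refine List.IsPrefix.trans ?_ (ih (step s x))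
    rcases step_cases s x with ⟨h, -⟩ | ⟨k, -, -, h⟩
    · rw [h]
    · rw [h]
      exact List.prefix_append _ _

theorem blocks_prefix (L T : List ℕ) : blocks L <+: blocks (L ++ T) := by
  unfold blocks
  rw [run, run, List.foldl_append]
  exact (segments_prefix_foldl T _).map _

theorem noDvdSegment_run (L : List ℕ) : NoDvdSegment (2 ^ (run L).1) (run L).2.1 := by
  induction L using List.reverseRecOn with
  | nil => exact NoDvdSegment.nil _
  | append_singleton L x ih =>
    rw [run_concat]
    rcases step_cases (run L) x with ⟨h, hx⟩ | ⟨k, -, -, h⟩ <;> rw [h]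
    · exact ih.concat hx
    · exact NoDvdSegment.nil _

theorem apartChain_run {L : List ℕ} (hL : ∀ x ∈ L, 0 < x) :
    ApartChain (run L).1 (blocks L) := by
  induction L using List.reverseRecOn with
  | nil => exact apartChain_nil
  | append_singleton L x ih =>
    have ih := ih fun y hy => hL y (List.mem_append_left _ hy)
    have hx := hL x (List.mem_append_right _ (List.mem_singleton_self x))
    unfold blocks at ih ⊢
    rw [run_concat]
    rcases step_cases (run L) x with ⟨h, -⟩ | ⟨k, -, hdvd, h⟩ <;> rw [h]
    · exact ih
    · rw [List.map_append, List.map_singleton]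
      exact ih.concat (by simp [hx]) hdvd

theorem flatten_append_pending_sublist (L : List ℕ) :
    ((run L).2.2.flatten ++ (run L).2.1).Sublist L := by
  induction L using List.reverseRecOn with
  | nil => simp [run]
  | append_singleton L x ih =>
    rw [run_concat]
    rcases step_cases (run L) x with ⟨h, -⟩ | ⟨k, -, -, h⟩ <;> rw [h]
    · simpa only [List.append_assoc] using ih.append_right [x]
    · have : ((run L).2.2.flatten ++ (run L).2.1.drop k).Sublist L :=
        ((List.Sublist.refl _).append (List.drop_sublist _ _)).trans ih
      simpa only [List.flatten_append, List.flatten_singleton, List.append_nil,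
        List.append_assoc] using this.append_right [x]

theorem mem_blocks_filter_le {L : List ℕ} (hL : L.Pairwise (· < ·)) {b : ℕ}
    (hb : b ∈ blocks L) : b ∈ blocks (L.filter (· ≤ b)) := by
  induction L using List.reverseRecOn with
  | nil => simp [blocks, run] at hb
  | append_singleton L x ih =>
    obtain ⟨hL', -, hLx⟩ := List.pairwise_append.1 hL
    have hold : b ∈ blocks L → b ∈ blocks ((L ++ [x]).filter (· ≤ b)) := fun hbL => by
      rw [List.filter_append]
      exact (blocks_prefix _ _).subset (ih hL' hbL)
    unfold blocks at hb
    rw [run_concat] at hb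
    rcases step_cases (run L) x with ⟨h, -⟩ | ⟨k, -, -, h⟩ <;> rw [h] at hb
    · exact hold hb
    · rw [List.map_append, List.mem_append, List.map_singleton, List.mem_singleton] at hb
      rcases hb with hb | rfl
      · exact hold hb
      · rw [List.filter_eq_self.2]
        · unfold blocks
          rw [run_concat, h]
          simp
        · have hxb : x ≤ ((run L).2.1.drop k ++ [x]).sum := List.le_sum_of_mem (by simp)
          intro y hy
          rcases List.mem_append.1 hy with hy | hy
          · exact decide_eq_true ((hLx y hy x (List.mem_singleton_self x)).le.trans hxb)
          · rw [List.mem_singleton.1 hy]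
            exact decide_eq_true hxb

theorem foldl_step_of_length_le {T : List ℕ} {s : State}
    (h : (T.foldl step s).2.2.length ≤ s.2.2.length) :
    T.foldl step s = (s.1, s.2.1 ++ T, s.2.2) := by
  induction T generalizing s with
  | nil => simp
  | cons x T ih =>
    rw [List.foldl_cons] at h ⊢
    rcases step_cases s x with ⟨hs, -⟩ | ⟨k, -, -, hs⟩
    · rw [hs] at h ⊢
      rw [ih h]
      simp
    · have hgrow := (segments_prefix_foldl T (step s x)).length_le
      have hlen : (step s x).2.2.length = s.2.2.length + 1 := by simp [hs]
      omega

theorem length_blocks_lt_append (L : List ℕ) {T : List ℕ} (hT : 2 ^ (run L).1 ≤ T.length) :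
    (blocks L).length < (blocks (L ++ T)).length := by
  by_contra! hle
  have hrun : run (L ++ T) = ((run L).1, (run L).2.1 ++ T, (run L).2.2) := by
    rw [run, List.foldl_append, ← run]
    apply foldl_step_of_length_le
    simpa [blocks, run, List.foldl_append] using hle
  have := (noDvdSegment_run (L ++ T)).length_lt (Nat.two_pow_pos _)
  rw [hrun, List.length_append] at this
  dsimp only at this
  omega

open Classical in
noncomputable def stage (A : Set ℕ) (n : ℕ) : List ℕ := (List.range (n + 1)).filter (· ∈ A)

def blockSet (A : Set ℕ) : Set ℕ := {n | n ∈ blocks (stage A n)}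

variable {A : Set ℕ}

theorem mem_blockSet {n : ℕ} : n ∈ blockSet A ↔ n ∈ blocks (stage A n) := Iff.rfl

theorem mem_stage {i n : ℕ} : i ∈ stage A n ↔ i ∈ A ∧ i ≤ n := by
  simp [stage, and_comm]

theorem stage_pairwise_lt (A : Set ℕ) (n : ℕ) : (stage A n).Pairwise (· < ·) :=
  List.pairwise_lt_range.sublist List.filter_sublist

open Classical in
theorem stage_add (A : Set ℕ) (n k : ℕ) :
    stage A (n + k) = stage A n ++ ((List.range k).map (n + 1 + ·)).filter (· ∈ A) := by
  rw [stage, stage, Nat.add_right_comm, List.range_add, List.filter_append]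

theorem stage_prefix {n N : ℕ} (h : n ≤ N) : stage A n <+: stage A N := by
  obtain ⟨k, rfl⟩ := Nat.exists_eq_add_of_le h
  rw [stage_add]
  exact List.prefix_append _ _

theorem filter_stage_le {b N : ℕ} (h : b ≤ N) : (stage A N).filter (· ≤ b) = stage A b := by
  obtain ⟨k, rfl⟩ := Nat.exists_eq_add_of_le h
  rw [stage_add, List.filter_append, List.filter_eq_self.2, List.filter_eq_nil_iff.2,
    List.append_nil]
  · intro y hy
    obtain ⟨j, -, rfl⟩ := List.mem_map.1 (List.mem_filter.1 hy).1
    simp only [decide_eq_true_eq, not_le]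
    omega
  · intro y hy
    simpa using (mem_stage.1 hy).2

theorem mem_blocks_stage {n N : ℕ} (hn : n ∈ blockSet A) (h : n ≤ N) :
    n ∈ blocks (stage A N) := by
  obtain ⟨T, hT⟩ := stage_prefix (A := A) h
  rw [← hT]
  exact (blocks_prefix _ T).subset hn

theorem mem_blockSet_iff {n : ℕ} : n ∈ blockSet A ↔ ∃ N, n ∈ blocks (stage A N) := by
  refine ⟨fun hn => ⟨n, hn⟩, fun ⟨N, hN⟩ => ?_⟩
  rcases le_total N n with h | h
  · obtain ⟨T, hT⟩ := stage_prefix (A := A) h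
    rw [blockSet, Set.mem_ofPred_eq, ← hT]
    exact (blocks_prefix _ T).subset hN
  · have := mem_blocks_filter_le (stage_pairwise_lt A N) hN
    rwa [filter_stage_le h] at this

theorem apartChain_blocks_stage (hpos : ∀ x ∈ A, 0 < x) (N : ℕ) :
    ApartChain (run (stage A N)).1 (blocks (stage A N)) :=
  apartChain_run fun x hx => hpos x (mem_stage.1 hx).1

theorem blockSet_pos (hpos : ∀ x ∈ A, 0 < x) : ∀ n ∈ blockSet A, 0 < n :=
  fun n hn => ((apartChain_blocks_stage hpos n).1 n hn).1

theorem apart_blockSet (hpos : ∀ x ∈ A, 0 < x) : Apart (blockSet A) := by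
  intro x hx y hy hxy
  exact (apartChain_blocks_stage hpos (max x y)).apart x (mem_blocks_stage hx (le_max_left x y))
    y (mem_blocks_stage hy (le_max_right x y)) hxy

theorem FS_blocks_stage_subset (hpos : ∀ x ∈ A, 0 < x) (N : ℕ) :
    FS {b | b ∈ blocks (stage A N)} ⊆ FS A := by
  have hchain := apartChain_blocks_stage hpos N
  have hsub := (List.sublist_append_left _ _).trans (flatten_append_pending_sublist (stage A N))
  refine (FS_sums_subset ?_ hchain.pairwise_lt.nodup ?_).trans (FS_mono ?_)
  · exact ((stage_pairwise_lt A N).nodup).sublist hsub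
  · intro l hl hnil
    have := (hchain.1 l.sum (List.mem_map_of_mem hl)).1
    simp [hnil] at this
  · intro a ha
    exact (mem_stage.1 (hsub.subset ha)).1

theorem FS_blockSet_subset (hpos : ∀ x ∈ A, 0 < x) : FS (blockSet A) ⊆ FS A := by
  rintro _ ⟨S, hS, hSne, rfl⟩
  refine FS_blocks_stage_subset hpos (S.max' hSne) ⟨S, fun s hs => ?_, hSne, rfl⟩
  exact mem_blocks_stage (hS hs) (S.le_max' s hs)

theorem exists_length_stage_ge (hinf : A.Infinite) (k : ℕ) : ∃ N, k ≤ (stage A N).length := by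
  obtain ⟨S, hSA, rfl⟩ := hinf.exists_subset_card_eq k
  refine ⟨S.sup id, (Finset.card_le_card fun a ha => ?_).trans (List.toFinset_card_le _)⟩
  exact List.mem_toFinset.2 (mem_stage.2 ⟨hSA ha, Finset.le_sup (f := id) ha⟩)

theorem exists_length_blocks_stage_ge (hinf : A.Infinite) (k : ℕ) :
    ∃ N, k ≤ (blocks (stage A N)).length := by
  induction k with
  | zero => exact ⟨0, Nat.zero_le _⟩
  | succ k ih =>
    obtain ⟨N, hN⟩ := ih
    obtain ⟨N', hN'⟩ :=
      exists_length_stage_ge hinf ((stage A N).length + 2 ^ (run (stage A N)).1)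
    obtain ⟨T, hT⟩ := stage_prefix (A := A) (le_max_left N N')
    have hlen := (stage_prefix (A := A) (le_max_right N N')).length_le
    rw [← hT, List.length_append] at hlen
    have := length_blocks_lt_append (stage A N) (T := T) (by omega)
    rw [hT] at this
    exact ⟨max N N', by omega⟩

theorem blockSet_infinite (hpos : ∀ x ∈ A, 0 < x) (hinf : A.Infinite) :
    (blockSet A).Infinite := by
  intro hfin
  obtain ⟨N, hN⟩ := exists_length_blocks_stage_ge hinf (hfin.toFinset.card + 1)
  have hsub : (blocks (stage A N)).toFinset ⊆ hfin.toFinset := fun b hb =>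
    hfin.mem_toFinset.2 (mem_blockSet_iff.2 ⟨N, List.mem_toFinset.1 hb⟩)
  have := Finset.card_le_card hsub
  rw [List.toFinset_card_of_nodup (apartChain_blocks_stage hpos N).pairwise_lt.nodup] at this
  omega

theorem primrec_dvdSuffixIdx : Primrec₂ dvdSuffixIdx := by
  have hdvd : Primrec₂ fun (a : ℕ × List ℕ) (i : ℕ) =>
      decide ((a.2.drop i).sum % 2 ^ a.1 = 0) :=
    (Primrec.eq.comp (Primrec.nat_mod.comp
      (Primrec.list_sum.comp (Primrec.list_drop.comp Primrec.snd (Primrec.snd.comp Primrec.fst)))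
      (Primrec.nat_pow.comp (Primrec.const 2) (Primrec.fst.comp Primrec.fst)))
      (Primrec.const 0)).decide
  exact Primrec.list_findIdx (Primrec.list_range.comp (Primrec.list_length.comp Primrec.snd)) hdvd

theorem primrec_step : Primrec₂ step := by
  have he : Primrec fun z : State × ℕ => z.1.1 := Primrec.fst.comp Primrec.fst
  have hsegs : Primrec fun z : State × ℕ => z.1.2.2 :=
    Primrec.snd.comp (Primrec.snd.comp Primrec.fst)
  have hp : Primrec fun z : State × ℕ => z.1.2.1 ++ [z.2] :=
    Primrec.list_concat.comp (Primrec.fst.comp (Primrec.snd.comp Primrec.fst)) Primrec.snd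
  have hk : Primrec fun z : State × ℕ => dvdSuffixIdx z.1.1 (z.1.2.1 ++ [z.2]) :=
    primrec_dvdSuffixIdx.comp he hp
  have hseg : Primrec fun z : State × ℕ =>
      (z.1.2.1 ++ [z.2]).drop (dvdSuffixIdx z.1.1 (z.1.2.1 ++ [z.2])) :=
    Primrec.list_drop.comp hk hp
  exact Primrec.ite (Primrec.nat_lt.comp hk (Primrec.list_length.comp hp))
    ((Primrec.list_sum.comp hseg).pair
      ((Primrec.const []).pair (Primrec.list_concat.comp hsegs hseg)))
    (he.pair (hp.pair hsegs))

theorem primrec_blocks : Primrec blocks :=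
  Primrec.list_map (Primrec.snd.comp (Primrec.snd.comp
    (Primrec.list_foldl Primrec.id (Primrec.const ((0, [], []) : State))
      (primrec_step.comp (Primrec.fst.comp Primrec.snd) (Primrec.snd.comp Primrec.snd)).to₂)))
    (Primrec.list_sum.comp Primrec.snd).to₂

def stageOfMask (n s : ℕ) : List ℕ := (List.range (n + 1)).filter fun i => s.testBit i

def blockSetIndicator (n s : ℕ) : ℕ := if n ∈ blocks (stageOfMask n s) then 1 else 0

theorem primrec_blockSetIndicator : Primrec₂ blockSetIndicator := by
  have hstage : Primrec₂ stageOfMask := by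
    have hbit : PrimrecRel fun (i s : ℕ) => s / 2 ^ i % 2 = 1 :=
      Primrec.eq.comp₂ (Primrec.nat_mod.comp₂ (Primrec.nat_div.comp₂ Primrec₂.right
        (Primrec.nat_pow.comp₂ (Primrec₂.const 2) Primrec₂.left)) (Primrec₂.const 2))
        (Primrec₂.const 1)
    exact (hbit.listFilter.comp (Primrec.list_range.comp (Primrec.succ.comp Primrec.fst))
      Primrec.snd).of_eq fun z => by simp [stageOfMask, Nat.testBit_eq_decide_div_mod_eq]
  have hmem : PrimrecPred fun z : ℕ × ℕ => z.1 ∈ blocks (stageOfMask z.1 z.2) :=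
    ((PrimrecRel.exists_mem_list Primrec.eq).comp (primrec_blocks.comp hstage) Primrec.fst).of_eq
      fun z => by simp
  exact Primrec.ite hmem (Primrec.const 1) (Primrec.const 0)

theorem stageOfMask_prefixMask (A : Set ℕ) (n : ℕ) :
    stageOfMask n (prefixMask A (n + 1)) = stage A n :=
  List.filter_congr fun i hi => Bool.eq_iff_iff.2 <| by
    simpa using testBit_prefixMask (A := A) (List.mem_range.1 hi)

theorem blockSetIndicator_prefixMask (A : Set ℕ) (n : ℕ) :
    blockSetIndicator n (prefixMask A (n + 1)) = (blockSet A).indicator (fun _ => 1) n := by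
  rw [blockSetIndicator, stageOfMask_prefixMask]
  by_cases hn : n ∈ blockSet A
  · rw [Set.indicator_of_mem hn, if_pos (mem_blockSet.1 hn)]
  · rw [Set.indicator_of_notMem hn, if_neg (mt mem_blockSet.2 hn)]

theorem turingRed_blockSet (A : Set ℕ) : TuringRed (blockSet A) A := by
  have hmask : OracleRecursiveIn (chi A) ↑fun n => prefixMask A (n + 1) :=
    OracleRecursiveIn.comp_total (oracleRecursiveIn_prefixMask A)
      (OracleRecursiveIn.of_computable Computable.succ)
  have h := OracleRecursiveIn.comp_total
    (OracleRecursiveIn.of_computable (Primrec₂.unpaired.2 primrec_blockSetIndicator).to_comp)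
    (OracleRecursiveIn.pair_total (OracleRecursiveIn.of_computable Computable.id) hmask)
  refine OracleRecursiveIn.of_eq h fun n => ?_
  simp [chi, blockSetIndicator_prefixMask]

end BlockMachine

theorem stmt5 (A : Set ℕ) (hpos : ∀ x ∈ A, 0 < x) (hinf : A.Infinite) :
    ∃ B : Set ℕ, (∀ x ∈ B, 0 < x) ∧ B.Infinite ∧ TuringRed B A ∧
      Apart B ∧ FS B ⊆ FS A := by
  exact ⟨BlockMachine.blockSet A, BlockMachine.blockSet_pos hpos,
    BlockMachine.blockSet_infinite hpos hinf, BlockMachine.turingRed_blockSet A,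
    BlockMachine.apart_blockSet hpos, BlockMachine.FS_blockSet_subset hpos⟩
end

section
/- Let F : ℕ³ → ℕ be nondecreasing in its second and in its third argument, and let A = {x ∈ ℕ : for every y the sequence s ↦ F(x,y,s) is bounded}. Assume A ⊆ ℤ⁺ is infinite, has weak apartness, and A ∩ B^n ≠ ∅ for a given n. For y, s define x(n,y,s) to be the least x ∈ B^n such that F(x,y,s) ≤ F(x',y,s) for all x' ∈ B^n. Then lim_y lim_s x(n,y,s) exists and equals the unique element of A ∩ B^n. -/
theorem stmt10 (F : ℕ → ℕ → ℕ → ℕ)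
    (hmono₂ : ∀ x s, Monotone fun y => F x y s)
    (hmono₃ : ∀ x y, Monotone fun s => F x y s)
    (A : Set ℕ) (hA : A = {x | ∀ y, ∃ b, ∀ s, F x y s ≤ b})
    (hpos : ∀ x ∈ A, 0 < x) (hinf : A.Infinite) (hwa : WeakApart A)
    (n : ℕ) (hne : (A ∩ Bset n).Nonempty)
    (xfun : ℕ → ℕ → ℕ)
    (hx : ∀ y s, xfun y s =
      sInf {x | x ∈ Bset n ∧ ∀ x' ∈ Bset n, F x y s ≤ F x' y s}) :
    ∃ a, A ∩ Bset n = {a} ∧ ∃ Y, ∀ y > Y, ∃ S, ∀ s > S, xfun y s = a := by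

  obtain ⟨a, haA, haB⟩ := hne
  have hsing : A ∩ Bset n = {a} := (hwa.1 n).eq_singleton_of_mem ⟨haA, haB⟩
  refine ⟨a, hsing, ?_⟩
  have hfin : (Bset n).Finite := by
    apply Set.Finite.subset (Set.finite_Iio (2 ^ (n + 1)))
    rintro x ⟨hx0, hxn⟩
    have h2 : x < 2 ^ (Nat.log 2 x + 1) := Nat.lt_pow_succ_log_self (by norm_num) x
    rw [show Nat.log 2 x = n from hxn] at h2
    exact h2
  have key : ∀ x, ∃ y0, x ∈ Bset n → x ≠ a → ∀ y ≥ y0, ∀ b, ∃ s, b < F x y s := by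
    intro x
    by_cases hxB : x ∈ Bset n
    · by_cases hxa : x = a
      · exact ⟨0, fun _ h => absurd hxa h⟩
      · have hxA : x ∉ A := by
          intro hxA
          exact hxa (Set.eq_of_mem_singleton (hsing ▸ (⟨hxA, hxB⟩ : x ∈ A ∩ Bset n)))
        rw [hA] at hxA
        simp only [Set.mem_setOf_eq, not_forall, not_exists, not_le] at hxA
        obtain ⟨y0, hy0⟩ := hxA
        refine ⟨y0, fun _ _ y hy b => ?_⟩
        obtain ⟨s, hs⟩ := hy0 b
        exact ⟨s, lt_of_lt_of_le hs (hmono₂ x s hy)⟩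
    · exact ⟨0, fun h => absurd h hxB⟩
  choose y0 hy0 using key
  refine ⟨hfin.toFinset.sup y0, fun y hy => ?_⟩
  have haA' := haA
  rw [hA] at haA'
  obtain ⟨b, hb⟩ := haA' y
  have step : ∀ x, ∃ sx, x ∈ Bset n → x ≠ a → b < F x y sx := by
    intro x
    by_cases hxB : x ∈ Bset n
    · by_cases hxa : x = a
      · exact ⟨0, fun _ h => absurd hxa h⟩
      · have hyy : y ≥ y0 x :=
          le_of_lt (lt_of_le_of_lt (Finset.le_sup (hfin.mem_toFinset.mpr hxB)) hy)
        obtain ⟨s, hs⟩ := hy0 x hxB hxa y hyy b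
        exact ⟨s, fun _ _ => hs⟩
    · exact ⟨0, fun h => absurd h hxB⟩
  choose sx hsx using step
  refine ⟨hfin.toFinset.sup sx, fun s hs => ?_⟩
  have hbig : ∀ x ∈ Bset n, x ≠ a → b < F x y s := by
    intro x hxB hxa
    have hss : sx x ≤ s :=
      le_of_lt (lt_of_le_of_lt (Finset.le_sup (hfin.mem_toFinset.mpr hxB)) hs)
    exact lt_of_lt_of_le (hsx x hxB hxa) (hmono₃ x y hss)
  have hset : {x | x ∈ Bset n ∧ ∀ x' ∈ Bset n, F x y s ≤ F x' y s} = {a} := by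
    ext x
    simp only [Set.mem_setOf_eq, Set.mem_singleton_iff]
    constructor
    · rintro ⟨hxB, hxmin⟩
      by_contra hxa
      exact absurd (le_trans (hxmin a haB) (hb s)) (not_le.mpr (hbig x hxB hxa))
    · rintro rfl
      refine ⟨haB, fun x' hx' => ?_⟩
      by_cases hxa : x' = x
      · subst hxa; exact le_refl _
      · exact le_of_lt (lt_of_le_of_lt (hb s) (hbig x' hx' hxa))
  rw [hx, hset, csInf_singleton]
end

section
/- Let x₁, x₂, x₃ be pairwise distinct positive integers with λ(x₁) = λ(x₂) = λ(x₃) = l. Then there exist two distinct indices i, j ∈ {1,2,3} such that λ(x_i + x_j) = l + 1. -/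
lemma odd_part (x : ℕ) (hx : 0 < x) : ∃ a, Odd a ∧ x = 2 ^ (padicValNat 2 x) * a := by
  refine ⟨x / 2 ^ (padicValNat 2 x), ?_, ?_⟩
  · have h := Nat.not_dvd_ordCompl Nat.prime_two hx.ne'
    rw [Nat.factorization_def _ Nat.prime_two] at h
    exact Nat.odd_iff.mpr (by omega)
  · have h := Nat.ordProj_mul_ordCompl_eq_self x 2
    rw [Nat.factorization_def _ Nat.prime_two] at h
    exact h.symm

lemma val_sum_odd (a b : ℕ) (ha : Odd a) (hb : Odd b) (h : a % 4 = b % 4) :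
    padicValNat 2 (a + b) = 1 := by
  rw [Nat.odd_iff] at ha hb
  obtain ⟨m, hm, hmo⟩ : ∃ m, a + b = 2 * m ∧ m % 2 = 1 := by
    refine ⟨(a + b) / 2, ?_, ?_⟩ <;> omega
  rw [hm, padicValNat.mul (by norm_num) (by omega)]
  have : padicValNat 2 m = 0 := padicValNat.eq_zero_of_not_dvd (by omega)
  rw [this]
  simp [padicValNat.self]

lemma key (x y l : ℕ) (hx : 0 < x) (hy : 0 < y)
    (hlx : lam x = l) (hly : lam y = l)
    (hmod : x / 2 ^ l % 4 = y / 2 ^ l % 4) : lam (x + y) = l + 1 := by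
  obtain ⟨a, ha, hxa⟩ := odd_part x hx
  obtain ⟨b, hb, hyb⟩ := odd_part y hy
  unfold lam at hlx hly ⊢
  rw [hlx] at hxa; rw [hly] at hyb
  have hax : x / 2 ^ l = a := by
    rw [hxa, Nat.mul_div_cancel_left _ (by positivity)]
  have hby : y / 2 ^ l = b := by
    rw [hyb, Nat.mul_div_cancel_left _ (by positivity)]
  rw [hax, hby] at hmod
  rw [hxa, hyb, ← Nat.mul_add, padicValNat.mul (by positivity) (by
    have := ha.pos; omega), padicValNat.prime_pow, val_sum_odd a b ha hb hmod]

theorem stmt17 (x₁ x₂ x₃ l : ℕ) (h1 : 0 < x₁) (h2 : 0 < x₂) (h3 : 0 < x₃)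
    (h12 : x₁ ≠ x₂) (h13 : x₁ ≠ x₃) (h23 : x₂ ≠ x₃)
    (hl1 : lam x₁ = l) (hl2 : lam x₂ = l) (hl3 : lam x₃ = l) :
    lam (x₁ + x₂) = l + 1 ∨ lam (x₁ + x₃) = l + 1 ∨ lam (x₂ + x₃) = l + 1 := by
  have odd1 : (x₁ / 2 ^ l) % 2 = 1 := by
    obtain ⟨a, ha, hx⟩ := odd_part x₁ h1
    unfold lam at hl1; rw [hl1] at hx
    rw [hx, Nat.mul_div_cancel_left _ (by positivity)]
    exact Nat.odd_iff.mp ha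
  have odd2 : (x₂ / 2 ^ l) % 2 = 1 := by
    obtain ⟨a, ha, hx⟩ := odd_part x₂ h2
    unfold lam at hl2; rw [hl2] at hx
    rw [hx, Nat.mul_div_cancel_left _ (by positivity)]
    exact Nat.odd_iff.mp ha
  have odd3 : (x₃ / 2 ^ l) % 2 = 1 := by
    obtain ⟨a, ha, hx⟩ := odd_part x₃ h3
    unfold lam at hl3; rw [hl3] at hx
    rw [hx, Nat.mul_div_cancel_left _ (by positivity)]
    exact Nat.odd_iff.mp ha
  have m1 : x₁ / 2 ^ l % 4 = 1 ∨ x₁ / 2 ^ l % 4 = 3 := by omega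
  have m2 : x₂ / 2 ^ l % 4 = 1 ∨ x₂ / 2 ^ l % 4 = 3 := by omega
  have m3 : x₃ / 2 ^ l % 4 = 1 ∨ x₃ / 2 ^ l % 4 = 3 := by omega
  rcases m1 with a1 | a1 <;> rcases m2 with a2 | a2 <;> rcases m3 with a3 | a3
  · exact Or.inl (key _ _ _ h1 h2 hl1 hl2 (by omega))
  · exact Or.inl (key _ _ _ h1 h2 hl1 hl2 (by omega))
  · exact Or.inr (Or.inl (key _ _ _ h1 h3 hl1 hl3 (by omega)))
  · exact Or.inr (Or.inr (key _ _ _ h2 h3 hl2 hl3 (by omega)))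
  · exact Or.inr (Or.inr (key _ _ _ h2 h3 hl2 hl3 (by omega)))
  · exact Or.inr (Or.inl (key _ _ _ h1 h3 hl1 hl3 (by omega)))
  · exact Or.inl (key _ _ _ h1 h2 hl1 hl2 (by omega))
  · exact Or.inl (key _ _ _ h1 h2 hl1 hl2 (by omega))
end
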